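/- Consider the ODE on the unit sphere dY_t/dt = -(d/dt log κ_t) · log_{Y_t}(y₁), Y_0 = y₀, where κ : [0,T] → (0,1] is C¹ with κ_0 = 1, y₀, y₁ ∈ S^{d-1} with y₁ ≠ ±y₀, and log is the spherical logarithm map. Then the curve Y_t = (sin(θ₀ - θ_t)/sin θ₀) y₁ + (sin θ_t / sin θ₀) y₀ with θ_t := κ_t · arccos⟨y₀, y₁⟩ solves this ODE. -/

import Mathlib

open scoped RealInnerProductSpace

/-- The slerp curve `Y_t = (sin(θ₀-θ_t)/sinθ₀) y₁ + (sinθ_t/sinθ₀) y₀`, `θ_t = κ_t θ₀`,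
solves the flow ODE `dY_t/dt = -(d/dt log κ_t) • log_{Y_t}(y₁)` on the sphere. -/
theorem stmt_5 (d : ℕ) (y₀ y₁ : EuclideanSpace ℝ (Fin d))
    (hy₀ : ‖y₀‖ = 1) (hy₁ : ‖y₁‖ = 1) (hne : y₁ ≠ y₀) (hne' : y₁ ≠ -y₀)
    (T : ℝ) (hT : 0 < T) (κ : ℝ → ℝ) (hκ : ContDiffOn ℝ 1 κ (Set.Icc 0 T))
    (hκ0 : κ 0 = 1) (hκrange : ∀ t ∈ Set.Icc 0 T, 0 < κ t ∧ κ t ≤ 1)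
    (θ₀ : ℝ) (hθ₀ : θ₀ = Real.arccos ⟪y₀, y₁⟫)
    (Y : ℝ → EuclideanSpace ℝ (Fin d))
    (hY : Y = fun t => (Real.sin (θ₀ - κ t * θ₀) / Real.sin θ₀) • y₁ +
      (Real.sin (κ t * θ₀) / Real.sin θ₀) • y₀)
    (t : ℝ) (ht : t ∈ Set.Ioo 0 T) (κ' : ℝ) (hκ' : HasDerivAt κ κ' t) :
    HasDerivAt Y
      ((-(κ' / κ t)) •
        ((Real.arccos ⟪Y t, y₁⟫ / Real.sqrt (1 - ⟪Y t, y₁⟫ ^ 2)) •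
          (y₁ - ⟪Y t, y₁⟫ • Y t))) t := by
  set c : ℝ := ⟪y₀, y₁⟫ with hc
  -- `-1 < c < 1`
  have habs : |c| ≤ 1 := by
    have := abs_real_inner_le_norm y₀ y₁
    rwa [hy₀, hy₁, one_mul] at this
  have hc1 : c < 1 := by
    rcases lt_or_eq_of_le ((abs_le.mp habs).2) with h | h
    · exact h
    · exact absurd ((inner_eq_one_iff_of_norm_eq_one hy₀ hy₁).mp h).symm hne
  have hcm1 : -1 < c := by
    rcases lt_or_eq_of_le ((abs_le.mp habs).1) with h | h
    · exact h
    · exfalso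
      have hny : ‖-y₁‖ = 1 := by rwa [norm_neg]
      have h1 : ⟪y₀, -y₁⟫ = (1 : ℝ) := by
        rw [inner_neg_right]; show -c = 1; rw [← h]; ring
      have h2 := (inner_eq_one_iff_of_norm_eq_one hy₀ hny).mp h1
      exact hne' (by rw [h2, neg_neg])
  have hθ₀pos : 0 < θ₀ := by rw [hθ₀]; exact Real.arccos_pos.mpr hc1
  have hθ₀lepi : θ₀ ≤ Real.pi := hθ₀ ▸ Real.arccos_le_pi c
  have hcos : Real.cos θ₀ = c := hθ₀ ▸ Real.cos_arccos hcm1.le hc1.le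
  have hsin₀ : 0 < Real.sin θ₀ := by
    rw [hθ₀, Real.sin_arccos]
    apply Real.sqrt_pos.mpr
    nlinarith
  have hθ₀pi : θ₀ < Real.pi := by
    rcases lt_or_eq_of_le hθ₀lepi with h | h
    · exact h
    · rw [h, Real.sin_pi] at hsin₀; linarith
  have hκt := hκrange t ⟨ht.1.le, ht.2.le⟩
  set θ : ℝ := κ t * θ₀ with hθ
  have hθpos : 0 < θ := mul_pos hκt.1 hθ₀pos
  have hθle : θ ≤ θ₀ := by
    calc θ ≤ 1 * θ₀ := by apply mul_le_mul_of_nonneg_right hκt.2 hθ₀pos.le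
    _ = θ₀ := one_mul _
  have hθpi : θ < Real.pi := lt_of_le_of_lt hθle hθ₀pi
  have hsinθ : 0 < Real.sin θ := Real.sin_pos_of_pos_of_lt_pi hθpos hθpi
  -- key trig identity
  have key : Real.sin θ₀ = Real.sin (θ₀ - θ) * Real.cos θ + Real.cos (θ₀ - θ) * Real.sin θ := by
    rw [← Real.sin_add]; ring_nf
  -- inner product of Y t with y₁
  have hy₁₁ : ⟪y₁, y₁⟫ = (1 : ℝ) := by
    rw [real_inner_self_eq_norm_sq, hy₁]; norm_num
  have hinner : ⟪Y t, y₁⟫ = Real.cos θ := by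
    rw [hY]
    simp only [inner_add_left, real_inner_smul_left, hy₁₁]
    rw [← hc, ← hcos, ← hθ, Real.sin_sub]
    field_simp
    ring
  have harccos : Real.arccos ⟪Y t, y₁⟫ = θ := by
    rw [hinner, Real.arccos_cos hθpos.le (le_trans hθle hθ₀lepi)]
  have hsqrt : Real.sqrt (1 - ⟪Y t, y₁⟫ ^ 2) = Real.sin θ := by
    rw [hinner]
    have : 1 - Real.cos θ ^ 2 = Real.sin θ ^ 2 := by
      have := Real.sin_sq_add_cos_sq θ; linarith
    rw [this, Real.sqrt_sq hsinθ.le]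
  -- compute the derivative of Y
  have h1 : HasDerivAt (fun s => κ s * θ₀) (κ' * θ₀) t := hκ'.mul_const θ₀
  have h2 : HasDerivAt (fun s => θ₀ - κ s * θ₀) (-(κ' * θ₀)) t := by
    exact h1.const_sub θ₀
  have h3 : HasDerivAt (fun s => Real.sin (θ₀ - κ s * θ₀) / Real.sin θ₀)
      (Real.cos (θ₀ - θ) * -(κ' * θ₀) / Real.sin θ₀) t := h2.sin.div_const _
  have h4 : HasDerivAt (fun s => Real.sin (κ s * θ₀) / Real.sin θ₀)
      (Real.cos θ * (κ' * θ₀) / Real.sin θ₀) t := h1.sin.div_const _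
  have h5 : HasDerivAt Y
      ((Real.cos (θ₀ - θ) * -(κ' * θ₀) / Real.sin θ₀) • y₁ +
       (Real.cos θ * (κ' * θ₀) / Real.sin θ₀) • y₀) t := by
    rw [hY]; exact (h3.smul_const y₁).add (h4.smul_const y₀)
  have hκne : κ t ≠ 0 := hκt.1.ne'
  have key2 : Real.sin θ₀ - Real.cos θ * Real.sin (θ₀ - θ) = Real.cos (θ₀ - θ) * Real.sin θ := by
    linarith [key]
  convert h5 using 1
  rw [harccos, hsqrt, hinner, hY]
  simp only [← hθ]
  match_scalars
  · field_simp
    linear_combination (-(κ' * θ)) * key2 +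
      (-(κ' * Real.cos (θ₀ - θ) * Real.sin θ)) * hθ
  · field_simp
    linear_combination (κ' * Real.cos θ) * hθ
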